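/- Let H : Set → Set be ω^op-continuous with a lifting H̃ to Alg(M) that is ω-cocontinuous, and suppose M0 = 1 in Alg(M). Let I be the initial H̃-algebra with colimit cocone i_n : HⁿM0 → I and f : I → L the unique M-algebra map with p_n ∘ f ∘ i_n = Hⁿs. For x ∈ L define h_n : L → L by h_n = f ∘ i_{n+1} ∘ Hⁿ! ∘ p_n and y^{(n)} = h_n(x). Then p_n(y^{(n)}) = p_n(x) for all n, hence d(y^{(n)}, x) < 2^{-n} and y^{(n)} → x; in particular the image of f is dense in L for the ultrametric d(x,y) = 2^{-n}, n minimal with p_n(x) ≠ p_n(y). -/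

import Mathlib

open CategoryTheory

universe u

namespace OnCoalgebrasOverAlgebras

/-- A distributive law `λ : MH ⟶ HM` of a monad `M` on `Set` over an endofunctor `H`,
equivalently (the data of) a lifting `H̃` of `H` to the Eilenberg–Moore category of `M`:
it satisfies `λ ∘ u_H = Hu` and `λ ∘ m_H = Hm ∘ λ_M ∘ Mλ`. -/
structure DistLaw (M : Monad (Type u)) (H : Type u ⥤ Type u) where
  app : ∀ X : Type u, M.toFunctor.obj (H.obj X) → H.obj (M.toFunctor.obj X)
  naturality : ∀ {X Y : Type u} (f : X → Y) (z : M.toFunctor.obj (H.obj X)),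
    app Y (M.toFunctor.map (H.map (TypeCat.ofHom f)) z) = H.map (M.toFunctor.map (TypeCat.ofHom f)) (app X z)
  unit : ∀ (X : Type u) (z : H.obj X),
    app X (M.η.app (H.obj X) z) = H.map (M.η.app X) z
  mul : ∀ (X : Type u) (z : M.toFunctor.obj (M.toFunctor.obj (H.obj X))),
    app X (M.μ.app (H.obj X) z)
      = H.map (M.μ.app X) (app (M.toFunctor.obj X) (M.toFunctor.map (TypeCat.ofHom (app X)) z))

/-- The terminal sequence `1, H1, H²1, …` of an endofunctor `H` on `Set`. -/
def TObj (H : Type u ⥤ Type u) : ℕ → Type u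
  | 0 => PUnit
  | n + 1 => H.obj (TObj H n)

/-- The connecting maps `Hⁿt : H^{n+1}1 → Hⁿ1` of the terminal sequence,
where `t : H1 → 1` is the unique map. -/
def TMap (H : Type u ⥤ Type u) : ∀ n : ℕ, TObj H (n + 1) → TObj H n
  | 0 => fun _ => PUnit.unit
  | n + 1 => fun x => H.map (TypeCat.ofHom (TMap H n)) x

/-- The limit `L = {(x_n) | Hⁿt (x_{n+1}) = x_n}` of the terminal sequence of `H`. -/
def L (H : Type u ⥤ Type u) : Type u :=
  { x : ∀ n, TObj H n // ∀ n, TMap H n (x (n + 1)) = x n }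

/-- The limit projections `p_n : L → Hⁿ1`. -/
def pr (H : Type u ⥤ Type u) (n : ℕ) : L H → TObj H n := fun x => x.1 n

/-- The `M`-algebra structures `a_n : MHⁿ1 → Hⁿ1` on the terminal sequence,
defined by `a₀ : M1 → 1` the unique map and `a_{n+1} = H a_n ∘ λ_{Hⁿ1}`. -/
def aStr {M : Monad (Type u)} {H : Type u ⥤ Type u} (l : DistLaw M H) :
    ∀ n : ℕ, M.toFunctor.obj (TObj H n) → TObj H n
  | 0 => fun _ => PUnit.unit
  | n + 1 => fun z => H.map (TypeCat.ofHom (aStr l n)) (l.app (TObj H n) z)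

/-- The cone `α_n : C → Hⁿ1` over the terminal sequence induced by an `H`-coalgebra
structure `c : C → HC`; `α₀` is the unique map and `α_{n+1} = Hα_n ∘ c`. -/
def alphaCone (H : Type u ⥤ Type u) {C : Type u} (c : C → H.obj C) :
    ∀ n : ℕ, C → TObj H n
  | 0 => fun _ => PUnit.unit
  | n + 1 => fun z => H.map (TypeCat.ofHom (alphaCone H c n)) (c z)

open Classical in
/-- The canonical ultrametric on the limit `L` of the terminal sequence:
`d(x,y) = 2^{-n}` with `n` least such that `p_n x ≠ p_n y`, and `d(x,y) = 0` if `x = y`. -/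
noncomputable def dL (H : Type u ⥤ Type u) (x y : L H) : ℝ :=
  if x = y then 0 else (2⁻¹ : ℝ) ^ sInf { n : ℕ | x.1 n ≠ y.1 n }

/-- The maps `Hⁿ! : Hⁿ1 → H^{n+1}1` generated by a map `! : 1 → H1`
(under `M0 = 1`, the unique algebra map out of the initial algebra `M0`). -/
def Emb (H : Type u ⥤ Type u) (e : TObj H 0 → TObj H 1) :
    ∀ n : ℕ, TObj H n → TObj H (n + 1)
  | 0 => e
  | n + 1 => fun x => H.map (TypeCat.ofHom (Emb H e n)) x

private lemma mapmap (F : Type u ⥤ Type u) {X Y Z : Type u} (f : X → Y) (g : Y → Z)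
    (x : F.obj X) : F.map (TypeCat.ofHom g) (F.map (TypeCat.ofHom f) x) = F.map (TypeCat.ofHom (fun w => g (f w))) x := by
  rw [← Functor.map_comp_apply]; rfl

/-- The lifting `H̃` of `H` to the Eilenberg–Moore category `Alg(M)` determined by a
distributive law `λ : MH ⟶ HM`: it sends an algebra `(X, x)` to `(HX, Hx ∘ λ_X)`
and satisfies `U^M ∘ H̃ = H ∘ U^M`. -/
def liftF (M : Monad (Type u)) (H : Type u ⥤ Type u) (l : DistLaw M H) :
    M.Algebra ⥤ M.Algebra where
  obj A :=
    { A := H.obj A.A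
      a := TypeCat.ofHom fun z => H.map A.a (l.app A.A z)
      unit := by
        ext z
        show H.map A.a (l.app A.A (M.η.app (H.obj A.A) z)) = z
        rw [l.unit A.A z, ← Functor.map_comp_apply, A.unit]
        simp
      assoc := by
        ext z
        show H.map A.a (l.app A.A (M.μ.app (H.obj A.A) z))
          = H.map A.a (l.app A.A (M.toFunctor.map
              (TypeCat.ofHom fun w => H.map A.a (l.app A.A w)) z))
        have e1 : (TypeCat.ofHom fun w => H.map A.a (l.app A.A w))
            = TypeCat.ofHom (l.app A.A) ≫ H.map A.a := rfl
        have n := l.naturality (⇑A.a)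
        simp only [TypeCat.ofHom_eq] at n
        rw [e1, Functor.map_comp_apply, n, l.mul A.A z, ← Functor.map_comp_apply,
          ← Functor.map_comp_apply, A.assoc] }
  map := fun {A B} f =>
    { f := H.map f.f
      h := by
        ext z
        show H.map B.a (l.app B.A (M.toFunctor.map (H.map f.f) z))
          = H.map f.f (H.map A.a (l.app A.A z))
        have n := l.naturality (⇑f.f)
        simp only [TypeCat.ofHom_eq] at n
        rw [n, ← Functor.map_comp_apply, ← Functor.map_comp_apply, f.h] }
  map_id A := by
    apply Monad.Algebra.Hom.ext
    show H.map (𝟙 A.A) = 𝟙 (H.obj A.A)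
    simp
  map_comp f g := by
    apply Monad.Algebra.Hom.ext
    show H.map (f.f ≫ g.f) = _
    rw [H.map_comp]
    rfl

/-! Because `i` is a cocone, `i_{n+1} ∘ Hⁿ! = i_n`, so `p_n ∘ h_n = p_n ∘ f ∘ i_n ∘ p_n = p_n`.
Two points of `L` that agree at level `n` agree at every level `m ≤ n` (apply the connecting
maps), so their distance is at most `2^{-(n+1)}`. -/

theorem pr_eq_of_pr_eq_of_le {H : Type u ⥤ Type u} {x y : L H} {m n : ℕ}
    (h : pr H n x = pr H n y) (hmn : m ≤ n) : pr H m x = pr H m y :=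
  Nat.decreasingInduction (motive := fun m _ => pr H m x = pr H m y)
    (fun k _ ih => (x.2 k).symm.trans ((congrArg (TMap H k) ih).trans (y.2 k))) h hmn

theorem dL_comm (H : Type u ⥤ Type u) (x y : L H) : dL H x y = dL H y x := by
  by_cases hxy : x = y
  · simp [hxy]
  · simp only [dL, hxy, Ne.symm hxy, if_false, ne_comm]

theorem dL_lt_of_pr_eq {H : Type u ⥤ Type u} {x y : L H} {n : ℕ}
    (h : pr H n x = pr H n y) : dL H x y < (2⁻¹ : ℝ) ^ n := by
  unfold dL
  split_ifs with hxy
  · positivity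
  have hne : { k : ℕ | x.1 k ≠ y.1 k }.Nonempty := by
    by_contra hempty
    exact hxy (Subtype.ext (funext fun k => by_contra fun hk => hempty ⟨k, hk⟩))
  have hlt : n < sInf { k : ℕ | x.1 k ≠ y.1 k } :=
    le_csInf hne fun k hk => not_le.mp fun hkn => hk (pr_eq_of_pr_eq_of_le h hkn)
  exact pow_lt_pow_right_of_lt_one₀ (by norm_num) (by norm_num) hlt

theorem exists_dL_lt_of_pr_eq {H : Type u ⥤ Type u} {x : L H} {y : ℕ → L H}
    (hy : ∀ n, pr H n (y n) = pr H n x) {ε : ℝ} (hε : 0 < ε) :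
    ∃ N : ℕ, ∀ n : ℕ, N ≤ n → dL H (y n) x < ε := by
  obtain ⟨N, hN⟩ := exists_pow_lt_of_lt_one hε (by norm_num : (2⁻¹ : ℝ) < 1)
  refine ⟨N, fun n hn => (dL_lt_of_pr_eq (hy n)).trans_le (le_trans ?_ hN.le)⟩
  exact pow_le_pow_of_le_one (by norm_num) (by norm_num) hn

theorem image_of_initial_algebra_dense_general
    (H : Type u ⥤ Type u)
    -- the unique algebra map `! : 1 = M0 → HM0 = H1`
    (e : TObj H 0 → TObj H 1)
    -- the initial `H̃`-algebra `I`: an `M`-algebra `(I, ζ)` …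
    (I : Type u)
    -- … with a cocone `i_n : HⁿM0 = Hⁿ1 → I` of `M`-algebra morphisms …
    (i : ∀ n : ℕ, TObj H n → I)
    (hicoc : ∀ (n : ℕ) (x : TObj H n), i (n + 1) (Emb H e n x) = i n x)
    -- the canonical `M`-algebra map `f : I → L` with `p_n ∘ f ∘ i_n = Hⁿs = id`
    (f : I → L H)
    (hfi : ∀ (n : ℕ) (x : TObj H n), pr H n (f (i n x)) = x) :
    (∀ x : L H,
      -- `p_n (y⁽ⁿ⁾) = p_n x` where `y⁽ⁿ⁾ = (f ∘ i_{n+1} ∘ Hⁿ! ∘ p_n) x`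
      (∀ n : ℕ, pr H n (f (i (n + 1) (Emb H e n (pr H n x)))) = pr H n x) ∧
      -- hence `d(y⁽ⁿ⁾, x) < 2^{-n}`
      (∀ n : ℕ, dL H (f (i (n + 1) (Emb H e n (pr H n x)))) x < (2⁻¹ : ℝ) ^ n) ∧
      -- and `y⁽ⁿ⁾ → x`
      (∀ ε : ℝ, 0 < ε → ∃ N : ℕ, ∀ n : ℕ, N ≤ n →
        dL H (f (i (n + 1) (Emb H e n (pr H n x)))) x < ε)) ∧
    -- in particular the image of `f` is dense in `L`
    (∀ (x : L H) (ε : ℝ), 0 < ε → ∃ w : I, dL H x (f w) < ε) := by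
  have hpr : ∀ (x : L H) (n : ℕ),
      pr H n (f (i (n + 1) (Emb H e n (pr H n x)))) = pr H n x := fun x n => by
    rw [hicoc, hfi]
  refine ⟨fun x => ⟨hpr x, fun n => dL_lt_of_pr_eq (hpr x n),
    fun ε hε => exists_dL_lt_of_pr_eq (hpr x) hε⟩, fun x ε hε => ?_⟩
  obtain ⟨N, hN⟩ := exists_dL_lt_of_pr_eq (hpr x) hε
  exact ⟨_, dL_comm H x _ ▸ hN N le_rfl⟩

/-- In the setting of Theorem 1 (ω^op-continuous `H`, ω-cocontinuous
lifting `H̃`, `M0 = 1`), let `I` be the initial `H̃`-algebra with colimit cocone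
`i_n : HⁿM0 → I` and `f : I → L` the unique `M`-algebra map with `p_n ∘ f ∘ i_n = Hⁿs`.
For `x ∈ L` put `h_n = f ∘ i_{n+1} ∘ Hⁿ! ∘ p_n` and `y⁽ⁿ⁾ = h_n x`.  Then
`p_n y⁽ⁿ⁾ = p_n x` for all `n`, hence `d(y⁽ⁿ⁾, x) < 2^{-n}` and `y⁽ⁿ⁾ → x`; in
particular the image of `f` is dense in `L` for the ultrametric `d`. -/
theorem image_of_initial_algebra_dense
    (M : Monad (Type u)) (H : Type u ⥤ Type u)
    -- `H` is `ω^op`-continuous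
    [Limits.PreservesLimitsOfShape ℕᵒᵖ H]
    -- `H` admits a lifting `H̃` to `Alg(M)`, which is `ω`-cocontinuous
    (l : DistLaw M H)
    [Limits.PreservesColimitsOfShape ℕ (liftF M H l)]
    -- `M0 = 1` in `Alg(M)`: the free algebra on the empty set is a singleton
    (h0 : Subsingleton (M.toFunctor.obj PEmpty))
    (h1 : Nonempty (M.toFunctor.obj PEmpty))
    -- the final coalgebra structure `ξ : L ≅ HL` obtained from the limit
    (ξ : L H → H.obj (L H)) (hbij : Function.Bijective ξ)
    (hξ : ∀ (n : ℕ) (x : L H), pr H (n + 1) x = H.map (TypeCat.ofHom (pr H n)) (ξ x))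
    -- the `M`-algebra structure `γ : ML → L`, the unique coalgebra map from `(ML, λ_L ∘ Mξ)`
    (γ : M.toFunctor.obj (L H) → L H)
    (hγ : ∀ z, ξ (γ z) = H.map (TypeCat.ofHom γ) (l.app (L H) (M.toFunctor.map (TypeCat.ofHom ξ) z)))
    -- the unique algebra map `! : 1 = M0 → HM0 = H1`
    (e : TObj H 0 → TObj H 1)
    (he : ∀ z, e (aStr l 0 z) = aStr l 1 (M.toFunctor.map (TypeCat.ofHom e) z))
    -- the initial `H̃`-algebra `I`: an `M`-algebra `(I, ζ)` …
    (I : Type u) (ζ : M.toFunctor.obj I → I)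
    (hζu : ∀ z, ζ (M.η.app I z) = z)
    (hζm : ∀ z, ζ (M.μ.app I z) = ζ (M.toFunctor.map (TypeCat.ofHom ζ) z))
    -- … with a cocone `i_n : HⁿM0 = Hⁿ1 → I` of `M`-algebra morphisms …
    (i : ∀ n : ℕ, TObj H n → I)
    (hialg : ∀ (n : ℕ) (z : M.toFunctor.obj (TObj H n)),
      i n (aStr l n z) = ζ (M.toFunctor.map (TypeCat.ofHom (i n)) z))
    (hicoc : ∀ (n : ℕ) (x : TObj H n), i (n + 1) (Emb H e n x) = i n x)
    -- … which is colimiting in `Alg(M)` for the initial sequence `M0 → HM0 → H²M0 → …`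
    (hcolim : ∀ (B : Type u) (b : M.toFunctor.obj B → B),
      (∀ z, b (M.η.app B z) = z) →
      (∀ z, b (M.μ.app B z) = b (M.toFunctor.map (TypeCat.ofHom b) z)) →
      ∀ g : ∀ n : ℕ, TObj H n → B,
        (∀ (n : ℕ) (z : M.toFunctor.obj (TObj H n)),
          g n (aStr l n z) = b (M.toFunctor.map (TypeCat.ofHom (g n)) z)) →
        (∀ (n : ℕ) (x : TObj H n), g (n + 1) (Emb H e n x) = g n x) →
        ∃! h : I → B,
          (∀ z, h (ζ z) = b (M.toFunctor.map (TypeCat.ofHom h) z)) ∧ ∀ (n : ℕ) (x : TObj H n), h (i n x) = g n x)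
    -- the canonical `M`-algebra map `f : I → L` with `p_n ∘ f ∘ i_n = Hⁿs = id`
    (f : I → L H)
    (hfalg : ∀ z, f (ζ z) = γ (M.toFunctor.map (TypeCat.ofHom f) z))
    (hfi : ∀ (n : ℕ) (x : TObj H n), pr H n (f (i n x)) = x) :
    (∀ x : L H,
      -- `p_n (y⁽ⁿ⁾) = p_n x` where `y⁽ⁿ⁾ = (f ∘ i_{n+1} ∘ Hⁿ! ∘ p_n) x`
      (∀ n : ℕ, pr H n (f (i (n + 1) (Emb H e n (pr H n x)))) = pr H n x) ∧
      -- hence `d(y⁽ⁿ⁾, x) < 2^{-n}`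
      (∀ n : ℕ, dL H (f (i (n + 1) (Emb H e n (pr H n x)))) x < (2⁻¹ : ℝ) ^ n) ∧
      -- and `y⁽ⁿ⁾ → x`
      (∀ ε : ℝ, 0 < ε → ∃ N : ℕ, ∀ n : ℕ, N ≤ n →
        dL H (f (i (n + 1) (Emb H e n (pr H n x)))) x < ε)) ∧
    -- in particular the image of `f` is dense in `L`
    (∀ (x : L H) (ε : ℝ), 0 < ε → ∃ w : I, dL H x (f w) < ε) :=
  image_of_initial_algebra_dense_general H e I i hicoc f hfi

end OnCoalgebrasOverAlgebras
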